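/- The symmetric 2×2 matrix A(a₁,a₂) = [[cosh(4a₂), sinh(2(a₁+a₂))], [sinh(2(a₁+a₂)), cosh(4a₁)]] has determinant cosh²(2(a₂−a₁)) and is positive definite for all (a₁,a₂) ∈ ℝ². -/

import Mathlib

/-!
Writing `cᵢ = cosh (2 aᵢ)` and `sᵢ = sinh (2 aᵢ)`, the double-angle and addition formulas give
`A = F Fᵀ` with `F = [[c₂, s₂], [s₁, c₁]]`, a Gram matrix of two rows. Since
`det F = c₁ c₂ - s₁ s₂ = cosh (2 (a₂ - a₁)) > 0`, the factor `F` is invertible, so `A` is positive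
definite and `det A = (det F)²`.
-/

noncomputable def Amat (a₁ a₂ : ℝ) : Matrix (Fin 2) (Fin 2) ℝ :=
  !![Real.cosh (4 * a₂), Real.sinh (2 * (a₁ + a₂));
     Real.sinh (2 * (a₁ + a₂)), Real.cosh (4 * a₁)]

open Matrix Real

theorem Matrix.posDef_mul_conjTranspose_self_of_det_ne_zero {n K : Type*} [Fintype n]
    [DecidableEq n] [Field K] [PartialOrder K] [StarRing K] [StarOrderedRing K]
    {M : Matrix n n K} (hM : M.det ≠ 0) : (M * Mᴴ).PosDef :=
  PosDef.mul_conjTranspose_self M <|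
    vecMul_injective_iff_isUnit.mpr <| (isUnit_iff_isUnit_det M).mpr hM.isUnit

noncomputable def Amat_factor (a₁ a₂ : ℝ) : Matrix (Fin 2) (Fin 2) ℝ :=
  !![cosh (2 * a₂), sinh (2 * a₂);
     sinh (2 * a₁), cosh (2 * a₁)]

theorem det_Amat_factor (a₁ a₂ : ℝ) :
    (Amat_factor a₁ a₂).det = cosh (2 * (a₂ - a₁)) := by
  rw [Amat_factor, det_fin_two_of, mul_sub, cosh_sub]

theorem Amat_eq_factor_mul_conjTranspose (a₁ a₂ : ℝ) :
    Amat a₁ a₂ = Amat_factor a₁ a₂ * (Amat_factor a₁ a₂)ᴴ := by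
  have h₄ (a : ℝ) : cosh (4 * a) = cosh (2 * a) ^ 2 + sinh (2 * a) ^ 2 := by
    rw [show 4 * a = 2 * (2 * a) by ring, cosh_two_mul]
  rw [conjTranspose_eq_transpose_of_trivial]
  ext i j
  fin_cases i <;> fin_cases j <;>
    simp only [Amat, Amat_factor, mul_apply, Fin.sum_univ_two, transpose_apply, of_apply,
      cons_val', cons_val_zero, cons_val_one, empty_val', cons_val_fin_one, Fin.zero_eta,
      Fin.mk_one, h₄, mul_add, sinh_add] <;>
    ring

theorem Amat_det_posDef (a₁ a₂ : ℝ) :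
    (Amat a₁ a₂).det = Real.cosh (2 * (a₂ - a₁)) ^ 2 ∧ (Amat a₁ a₂).PosDef := by
  have hF := det_Amat_factor a₁ a₂
  rw [Amat_eq_factor_mul_conjTranspose]
  refine ⟨?_, posDef_mul_conjTranspose_self_of_det_ne_zero (hF ▸ (cosh_pos _).ne')⟩
  rw [det_mul, det_conjTranspose, hF, star_trivial, sq]
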